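/- For every Motzkin path p = p₁⋯pₙ, the area satisfies ar(p) = Σ_{k : p_k = D} k − Σ_{i : p_i = U} i. -/

import Mathlib

/-- The three kinds of steps of a Motzkin path. -/
inductive Step : Type
  | U : Step
  | D : Step
  | H : Step
deriving DecidableEq
instance : Fintype Step :=
  Fintype.ofList [Step.U, Step.D, Step.H] (fun x => by cases x <;> simp)
/-- Number of indices `i` with `i < m` (i.e. in the prefix of length `m`,
with 0-based indexing) at which the word `p` has the letter `s`. -/
def countIn {n : ℕ} (p : Fin n → Step) (s : Step) (m : ℕ) : ℕ :=
  (Finset.univ.filter (fun i : Fin n => (i : ℕ) < m ∧ p i = s)).card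
/-- A word `p` of length `n` over `{U, D, H}` is a Motzkin path if every
prefix contains at least as many `U`'s as `D`'s and the whole word contains
equally many `U`'s and `D`'s. -/
def IsMotzkin {n : ℕ} (p : Fin n → Step) : Prop :=
  (∀ m ≤ n, countIn p Step.D m ≤ countIn p Step.U m) ∧
  countIn p Step.U n = countIn p Step.D n
/-- The height `h_i` of step `i`: the number of `j ≤ i` with `p_j = U` minus
the number of `j ≤ i` with `p_j = D`, increased by `1` when `p_i = D`. -/
def heightAt {n : ℕ} (p : Fin n → Step) (i : Fin n) : ℕ :=
  ((Finset.univ.filter (fun j : Fin n => j ≤ i ∧ p j = Step.U)).card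
    - (Finset.univ.filter (fun j : Fin n => j ≤ i ∧ p j = Step.D)).card)
    + (if p i = Step.D then 1 else 0)
/-- The area below a Motzkin path:
`ar(p) = ∑_{i : p_i = H} h_i + ∑_{i : p_i ∈ {U,D}} (h_i - 1/2)`. -/
def area {n : ℕ} (p : Fin n → Step) : ℚ :=
  (∑ i ∈ Finset.univ.filter (fun i : Fin n => p i = Step.H),
    (heightAt p i : ℚ))
  + ∑ i ∈ Finset.univ.filter (fun i : Fin n => p i = Step.U ∨ p i = Step.D),
      ((heightAt p i : ℚ) - 1/2)

/-!
Let `h m` be the height of the path after its first `m` steps. The `i`-th step spans a trapezoid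
of area `(h (i-1) + h i) / 2`, so, as `h 0 = h n = 0`, the area is `∑_{m=1}^{n} h m`. Writing
`h m = ∑_{i ≤ m} δ_i` with `δ = 1, -1, 0` for `U, D, H` and swapping the sums gives
`∑_i δ_i (n + 1 - i)`, which is `-∑_i δ_i i` because `∑_i δ_i = 0`.
-/

open Finset

theorem Finset.sum_range_avg_eq_sum_range_succ {K : Type*} [DivisionRing K] [CharZero K]
    (f : ℕ → K) {n : ℕ} (h : f 0 = f n) :
    ∑ i ∈ range n, (f i + f (i + 1)) / 2 = ∑ i ∈ range n, f (i + 1) := by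
  have hshift : ∑ i ∈ range n, f i = ∑ i ∈ range n, f (i + 1) := by
    have := (sum_range_succ f n).symm.trans (sum_range_succ' f n)
    rwa [h, add_right_cancel_iff] at this
  rw [← sum_div, sum_add_distrib, hshift, add_self_div_two]

theorem Fin.sum_range_sum_lt_succ {R : Type*} [CommRing R] {n : ℕ} (f : Fin n → R) :
    ∑ m ∈ range n, ∑ i ∈ univ.filter (fun i : Fin n => (i : ℕ) < m + 1), f i
      = ∑ i, f i * (n - i : ℕ) := by
  simp_rw [sum_filter]
  rw [sum_comm]
  refine sum_congr rfl fun i _ => ?_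
  have hcount : #{m ∈ range n | (i : ℕ) < m + 1} = n - i := by
    rw [show {m ∈ range n | (i : ℕ) < m + 1} = Ico (i : ℕ) n by ext; simp; omega,
      Nat.card_Ico]
  rw [← Finset.sum_filter, Finset.sum_const, hcount, nsmul_eq_mul, mul_comm]

namespace Step

def value : Step → ℚ
  | U => 1
  | D => -1
  | H => 0

theorem sum_value_mul {ι : Type*} (s : Finset ι) (q : ι → Step) (w : ι → ℚ) :
    ∑ i ∈ s, (q i).value * w i
      = ∑ i ∈ s with q i = U, w i - ∑ i ∈ s with q i = D, w i := by
  rw [sum_filter, sum_filter, ← sum_sub_distrib]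
  refine sum_congr rfl fun i _ => ?_
  cases q i <;> simp [value]

end Step

section Motzkin

variable {n : ℕ} (p : Fin n → Step)

def heightAfter (m : ℕ) : ℚ :=
  ∑ i ∈ univ.filter (fun i : Fin n => (i : ℕ) < m), (p i).value

theorem heightAfter_zero : heightAfter p 0 = 0 := by
  simp [heightAfter]

theorem heightAfter_length : heightAfter p n = ∑ i, (p i).value := by
  simp [heightAfter]

theorem heightAfter_eq_countIn (m : ℕ) :
    heightAfter p m = countIn p Step.U m - countIn p Step.D m := by
  simpa [heightAfter, countIn, filter_filter] using
    Step.sum_value_mul (univ.filter fun i : Fin n => (i : ℕ) < m) p 1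

theorem heightAfter_succ (i : Fin n) :
    heightAfter p (i + 1) = heightAfter p i + (p i).value := by
  have hinsert : univ.filter (fun j : Fin n => (j : ℕ) < i + 1)
      = insert i (univ.filter fun j : Fin n => (j : ℕ) < i) := by
    ext j; simp [le_iff_eq_or_lt, Fin.val_inj]
  rw [heightAfter, hinsert, sum_insert (by simp), add_comm, heightAfter]

theorem countIn_succ_eq_card (s : Step) (i : Fin n) :
    countIn p s (i + 1) = #(univ.filter fun j => j ≤ i ∧ p j = s) := by
  simp only [countIn, Nat.lt_succ_iff, Fin.val_fin_le]

theorem heightAt_eq_heightAfter (hprefix : ∀ m ≤ n, countIn p Step.D m ≤ countIn p Step.U m)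
    (i : Fin n) :
    (heightAt p i : ℚ) = heightAfter p (i + 1) + if p i = Step.D then 1 else 0 := by
  have hle := hprefix (i + 1) i.isLt
  rw [heightAt, ← countIn_succ_eq_card, ← countIn_succ_eq_card, heightAfter_eq_countIn]
  push_cast [Nat.cast_sub hle]
  rfl

theorem heightAfter_avg_eq (hprefix : ∀ m ≤ n, countIn p Step.D m ≤ countIn p Step.U m)
    (i : Fin n) :
    (heightAfter p i + heightAfter p (i + 1)) / 2
      = heightAt p i - if p i = Step.H then 0 else 1 / 2 := by
  rw [heightAt_eq_heightAfter p hprefix, heightAfter_succ]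
  cases p i <;> simp [Step.value] <;> ring

theorem area_eq_sum_avg_heightAfter
    (hprefix : ∀ m ≤ n, countIn p Step.D m ≤ countIn p Step.U m) :
    area p = ∑ i : Fin n, (heightAfter p i + heightAfter p (i + 1)) / 2 := by
  have hsteps : univ.filter (fun i => ¬p i = Step.H)
      = univ.filter fun i => p i = Step.U ∨ p i = Step.D := by
    ext i; simp only [mem_filter, mem_univ, true_and]; cases p i <;> simp
  simp_rw [heightAfter_avg_eq p hprefix]
  rw [← sum_filter_add_sum_filter_not _ (fun i => p i = Step.H), hsteps, area]
  congr 1 <;> refine sum_congr rfl fun i hi => ?_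
  · simp [(mem_filter.mp hi).2]
  · obtain h | h := (mem_filter.mp hi).2 <;> simp [h]

end Motzkin

/-- For every Motzkin path `p = p₁⋯pₙ`, the area satisfies
`ar(p) = ∑_{k : p_k = D} k - ∑_{i : p_i = U} i` (positions numbered
`1,…,n`). -/
theorem area_eq_sum_D_sub_sum_U (n : ℕ) (p : Fin n → Step) (hp : IsMotzkin p) :
    area p =
      (∑ k ∈ Finset.univ.filter (fun k : Fin n => p k = Step.D),
        (((k : ℕ) : ℚ) + 1))
      - ∑ i ∈ Finset.univ.filter (fun i : Fin n => p i = Step.U),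
          (((i : ℕ) : ℚ) + 1) := by
  obtain ⟨hprefix, hbalanced⟩ := hp
  have hend : heightAfter p n = 0 := by rw [heightAfter_eq_countIn, hbalanced, sub_self]
  have htotal : ∑ i, (p i).value = 0 := heightAfter_length p ▸ hend
  calc area p = ∑ i : Fin n, (heightAfter p i + heightAfter p (i + 1)) / 2 :=
        area_eq_sum_avg_heightAfter p hprefix
    _ = ∑ m ∈ range n, heightAfter p (m + 1) := by
        rw [Fin.sum_univ_eq_sum_range (fun m => (heightAfter p m + heightAfter p (m + 1)) / 2)]
        exact sum_range_avg_eq_sum_range_succ _ ((heightAfter_zero p).trans hend.symm)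
    _ = ∑ i, (p i).value * ((n - i : ℕ) : ℚ) := Fin.sum_range_sum_lt_succ _
    _ = (∑ i, (p i).value) * (n + 1) - ∑ i, (p i).value * ((i : ℕ) + 1) := by
        rw [sum_mul, ← sum_sub_distrib]
        refine sum_congr rfl fun i _ => ?_
        rw [Nat.cast_sub i.isLt.le]
        ring
    _ = _ := by rw [htotal, zero_mul, zero_sub, Step.sum_value_mul, neg_sub]
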